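/- arXiv:2511.19690 — 2 statements merged into one kernel-verified Lean document; each statement's English description precedes it below -/
import Mathlib

section
/- For every natural number n ≥ 2 and every i with 0 ≤ i ≤ n-2, the sequence defined by L_0 = 0 and L_{i+1} = ((n-(i+1))/(n-i)) · (L_i + 1) satisfies L_i = (n-i) · (H_n − H_{n-i}), where H_m denotes the m-th harmonic number. -/
/-- The m-th harmonicR number H_m = ∑_{j=1}^m 1/j. -/
noncomputable def harmonicR (m : ℕ) : ℝ := ∑ j ∈ Finset.range m, 1 / (j + 1 : ℝ)

lemma harmonicR_succ (m : ℕ) : harmonicR (m + 1) = harmonicR m + 1 / (m + 1 : ℝ) := by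
  simp [harmonicR, Finset.sum_range_succ]

theorem stmt_0 (n : ℕ) (hn : 2 ≤ n) (L : ℕ → ℝ) (h0 : L 0 = 0)
    (hrec : ∀ i : ℕ, i + 1 ≤ n - 2 →
      L (i + 1) = (((n : ℝ) - (i + 1)) / ((n : ℝ) - i)) * (L i + 1)) :
    ∀ i : ℕ, i ≤ n - 2 → L i = ((n : ℝ) - i) * (harmonicR n - harmonicR (n - i)) := by
  intro i
  induction i with
  | zero => intro _; simp [h0]
  | succ i ih =>
    intro h
    have hi : i ≤ n - 2 := Nat.le_of_succ_le h
    have hin : i + 1 ≤ n := le_trans h (Nat.sub_le _ _)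
    have hsub : n - i = (n - (i + 1)) + 1 := by omega
    have hcast : ((n - (i + 1) : ℕ) : ℝ) + 1 = (n : ℝ) - i := by
      have : ((n - (i + 1) : ℕ) : ℝ) = (n : ℝ) - (i + 1) := by
        push_cast [Nat.cast_sub hin]; ring
      rw [this]; ring
    have hH : harmonicR (n - i) = harmonicR (n - (i + 1)) + 1 / ((n : ℝ) - i) := by
      rw [hsub, harmonicR_succ, hcast]
    have hne : (n : ℝ) - i ≠ 0 := by
      have : (i : ℝ) < n := by exact_mod_cast lt_of_lt_of_le (Nat.lt_succ_self i) hin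
      linarith
    rw [hrec i h, ih hi, hH]
    push_cast
    field_simp
    ring
end

section
/- Let n ≥ 2 and let a_1 ≥ a_2 ≥ … ≥ a_n ≥ 0 be real numbers, and set a_{n+1} = 0. Suppose that for every j with 2 ≤ j ≤ n we have ∑_{i=1}^{j} a_i ≤ j + j·a_{j+1}, and suppose a_1 = a_2. Then a_1 ≤ H_n − 1/2, where H_n is the n-th harmonic number. -/
theorem stmt_2 (n : ℕ) (hn : 2 ≤ n) (a : ℕ → ℝ)
    (hmono : ∀ i : ℕ, 1 ≤ i → i < n → a (i + 1) ≤ a i)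
    (hnonneg : 0 ≤ a n)
    (htop : a (n + 1) = 0)
    (hineq : ∀ j : ℕ, 2 ≤ j → j ≤ n →
      ∑ i ∈ Finset.Icc 1 j, a i ≤ (j : ℝ) + (j : ℝ) * a (j + 1))
    (hbal : a 1 = a 2) :
    a 1 ≤ harmonicR n - 1 / 2 := by
  have key : ∀ j, 2 ≤ j → j ≤ n →
      (j : ℝ) * (a 1 - harmonicR j + 3/2) ≤ ∑ i ∈ Finset.Icc 1 j, a i := by
    intro j hj
    induction j, hj using Nat.le_induction with
    | base =>
      intro _
      have hs : ∑ i ∈ Finset.Icc 1 2, a i = a 1 + a 2 := by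
        rw [Finset.sum_Icc_succ_top (by norm_num : (1:ℕ) ≤ 2)]
        simp
      have hh : harmonicR 2 = 3/2 := by
        simp [harmonicR, Finset.sum_range_succ]
        norm_num
      rw [hs, hh]
      push_cast
      linarith
    | succ j hj2 ih =>
      intro hle
      have hjn : j ≤ n := by omega
      have ihA := ih hjn
      have hB := hineq j hj2 hjn
      have hj0 : (0:ℝ) < (j:ℝ) := by positivity
      have h3 : a 1 - harmonicR j + 3/2 - 1 ≤ a (j+1) := by
        have h4 : (j:ℝ) * (a 1 - harmonicR j + 3/2 - 1) ≤ (j:ℝ) * a (j+1) := by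
          nlinarith [ihA, hB]
        exact le_of_mul_le_mul_left h4 hj0
      have hs : ∑ i ∈ Finset.Icc 1 (j+1), a i = (∑ i ∈ Finset.Icc 1 j, a i) + a (j+1) := by
        rw [Finset.sum_Icc_succ_top (by omega : (1:ℕ) ≤ j+1)]
      have hh : harmonicR (j+1) = harmonicR j + 1/((j:ℝ)+1) := by
        simp [harmonicR, Finset.sum_range_succ]
      have hinv : ((j:ℝ)+1) * (1/((j:ℝ)+1)) = 1 := by
        field_simp
      rw [hs, hh]
      push_cast
      nlinarith [ihA, h3, hinv]
  have hfin := key n hn le_rfl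
  have hB := hineq n hn le_rfl
  rw [htop] at hB
  have hn0 : (0:ℝ) < (n:ℝ) := by positivity
  nlinarith [hfin, hB]
end
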